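/- Let q = p^e > 2 be a prime power, r ≥ 1 a divisor of 2e, λ ∈ F* with λ^{p^{tr}} = λ^q for some 0 ≤ t < 2e/r, k = k_{r,λ}(q), and η ∈ F*. A flag (⟨u₂⟩, L₂) ∈ V(q) is adjacent to (0, N(η)) in Γ_{r,λ}(q) if and only if there exist an integer 0 ≤ i < k, f ∈ F \ {1}, g ∈ F and h ∈ F* with η^q g + η g^q = f^{q+1}, such that (i) u₂ is a scalar multiple of (fh/(1−f), ηh/(1−f), gh/(1−f)), and (ii) L₂ is the set of absolute points ⟨x,y,z⟩ satisfying (λ^{q p^{ir}} η^q + f^q h)x − (λ^{q p^{ir}} η^{q−1} f + g^q h)y − η^q h z = 0. -/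

import Mathlib

namespace UnitaryGraphPaper

variable (F : Type) [Field F]

/-- The Hermitian form β((x₁,y₁,z₁),(x₂,y₂,z₂)) = −x₁x₂^q + y₁z₂^q + z₁y₂^q. -/
def beta (q : ℕ) (u v : F × F × F) : F :=
  -(u.1 * v.1 ^ q) + u.2.1 * v.2.2 ^ q + u.2.2 * v.2.1 ^ q

/-- A vector is isotropic if β(u,u) = 0. -/
def Isotropic (q : ℕ) (u : F × F × F) : Prop := beta F q u u = 0

/-- Absolute points: 1-dimensional subspaces spanned by nonzero isotropic vectors. -/
def IsAbsolutePoint (q : ℕ) (P : Submodule F (F × F × F)) : Prop :=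
  ∃ u : F × F × F, u ≠ 0 ∧ Isotropic F q u ∧ P = Submodule.span F {u}

/-- Lines of the Hermitian unital: sets of absolute points contained in a 2-dimensional
subspace spanned by two linearly independent isotropic vectors. -/
def IsUnitalLine (q : ℕ) (l : Set (Submodule F (F × F × F))) : Prop :=
  ∃ u v : F × F × F, Isotropic F q u ∧ Isotropic F q v ∧ LinearIndependent F ![u, v] ∧
    l = {P | IsAbsolutePoint F q P ∧ P ≤ Submodule.span F ({u, v} : Set (F × F × F))}

/-- Flags of the Hermitian unital: incident point-line pairs. -/
def Flag (q : ℕ) : Type :=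
  {Pl : Submodule F (F × F × F) × Set (Submodule F (F × F × F)) //
    IsAbsolutePoint F q Pl.1 ∧ IsUnitalLine F q Pl.2 ∧ Pl.1 ∈ Pl.2}

/-- The set of absolute points ⟨x,y,z⟩ for which the determinant of the 3×3 matrix with
columns (x,y,z), u, w vanishes. -/
def detLine (q : ℕ) (u w : F × F × F) : Set (Submodule F (F × F × F)) :=
  {P | ∃ v : F × F × F, v ≠ 0 ∧ Isotropic F q v ∧ P = Submodule.span F {v} ∧
    (!![v.1, u.1, w.1; v.2.1, u.2.1, w.2.1; v.2.2, u.2.2, w.2.2] : Matrix (Fin 3) (Fin 3) F).det = 0}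

/-- The defining adjacency condition of the unitary graph Γ_{r,λ}(q), q = p^e. -/
def AdjCond (p q e r : ℕ) (lam : F) (v₁ v₂ : Flag F q) : Prop :=
  ∃ i : ℕ, i < 2 * e / r ∧ ∃ u₁ u₂ u₀ : F × F × F,
    u₁ ≠ 0 ∧ Isotropic F q u₁ ∧ v₁.1.1 = Submodule.span F {u₁} ∧
    u₂ ≠ 0 ∧ Isotropic F q u₂ ∧ v₂.1.1 = Submodule.span F {u₂} ∧
    ¬ Isotropic F q u₀ ∧ beta F q u₀ u₁ = 0 ∧ beta F q u₀ u₂ = 0 ∧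
    v₁.1.2 = detLine F q u₁ (u₀ + u₂) ∧
    v₂.1.2 = detLine F q u₂ (u₀ + lam ^ (q * p ^ (i * r)) • u₁)

/-- The unitary graph Γ_{r,λ}(q). -/
def unitaryGraph (p q e r : ℕ) (lam : F) : SimpleGraph (Flag F q) :=
  SimpleGraph.fromRel (AdjCond F p q e r lam)

/-- The absolute point ∞ = ⟨0,1,0⟩. -/
def ptInfty : Submodule F (F × F × F) := Submodule.span F {((0 : F), 1, 0)}

/-- The absolute point 0 = ⟨0,0,1⟩. -/
def ptZero : Submodule F (F × F × F) := Submodule.span F {((0 : F), 0, 1)}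

/-- The line L*: absolute points ⟨x,y,z⟩ with x = 0. -/
def lineLstar (q : ℕ) : Set (Submodule F (F × F × F)) :=
  {P | ∃ v : F × F × F, v ≠ 0 ∧ Isotropic F q v ∧ P = Submodule.span F {v} ∧ v.1 = 0}

/-- The line L: absolute points ⟨x,y,z⟩ with x = z. -/
def lineL (q : ℕ) : Set (Submodule F (F × F × F)) :=
  {P | ∃ v : F × F × F, v ≠ 0 ∧ Isotropic F q v ∧ P = Submodule.span F {v} ∧ v.1 = v.2.2}

/-- The line N(η): absolute points ⟨x,y,z⟩ with y = ηx. -/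
def lineN (q : ℕ) (eta : F) : Set (Submodule F (F × F × F)) :=
  {P | ∃ v : F × F × F, v ≠ 0 ∧ Isotropic F q v ∧ P = Submodule.span F {v} ∧ v.2.1 = eta * v.1}

/-- The line given by the homogenous equation A x + B y + C z = 0 (as a set of absolute
points). -/
def eqnLine (q : ℕ) (A B C : F) : Set (Submodule F (F × F × F)) :=
  {P | ∃ v : F × F × F, v ≠ 0 ∧ Isotropic F q v ∧ P = Submodule.span F {v} ∧
    A * v.1 + B * v.2.1 + C * v.2.2 = 0}

/-- Common neighbours of two vertices in a graph. -/
def commonNbrs {V : Type} (G : SimpleGraph V) (a b : V) : Set V :=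
  {c | G.Adj a c ∧ G.Adj b c}

/-!
Orthogonality to the point `0 = ⟨0,0,1⟩` forces the nonisotropic vector of the adjacency
condition to be `(a, 0, c₀)` with `a ≠ 0`. The determinant line through `0` and `W` is
`W₁ y = W₂ x`; as `N(η)` is a line of the unital it has an absolute point off `0`, so matching
it with `N(η)` gives `W₂ = η W₁ ≠ 0`, which puts the other point at `s • (f, η, g)` with `f ≠ 1`.
Its isotropy is `η^q g + η g^q = f^(q+1)` and its orthogonality to `(a, 0, c₀)` is
`c₀ η^q = a f^q`. The determinant is a dot product with a cross product, and the cross product of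
`s • (f, η, g)` and `(a, 0, D)` is proportional to the coefficients of the stated line as soon as
`η^q h D = a (μ η^q + f^q h)`; conversely, `(h, 0, h f^q / η^q)` realises the adjacency.
Since `h` ranges over `F*`, rescaling it absorbs `μ = λ^(q p^(ir))`, so every `i` gives the same
neighbours and one may take `i = 0`.
-/

variable {F} {q : ℕ}

lemma isotropic_zero_one_zero (hq : q ≠ 0) : Isotropic F q (0, 1, 0) := by
  simp [Isotropic, beta, zero_pow hq]

lemma isotropic_zero_zero_one (hq : q ≠ 0) : Isotropic F q (0, 0, 1) := by
  simp [Isotropic, beta, zero_pow hq]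

lemma isotropic_smul_iff {eta f g s : F} (hs : s ≠ 0) :
    Isotropic F q (s • (f, eta, g)) ↔ eta ^ q * g + eta * g ^ q = f ^ (q + 1) := by
  have key : beta F q (s • (f, eta, g)) (s • (f, eta, g)) =
      s ^ (q + 1) * (eta ^ q * g + eta * g ^ q - f ^ (q + 1)) := by
    simp only [beta, Prod.smul_fst, Prod.smul_snd, smul_eq_mul, mul_pow]
    ring
  rw [Isotropic, key, mul_eq_zero_iff_left (pow_ne_zero _ hs), sub_eq_zero]

lemma beta_smul_eq_zero_iff {eta f g s a c₀ : F} (hs : s ≠ 0) :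
    beta F q (a, 0, c₀) (s • (f, eta, g)) = 0 ↔ c₀ * eta ^ q = a * f ^ q := by
  have key : beta F q (a, 0, c₀) (s • (f, eta, g)) = s ^ q * (c₀ * eta ^ q - a * f ^ q) := by
    simp only [beta, Prod.smul_fst, Prod.smul_snd, smul_eq_mul, mul_pow]
    ring
  rw [key, mul_eq_zero_iff_left (pow_ne_zero _ hs), sub_eq_zero]

lemma snd_eq_zero_and_fst_ne_zero_of_orthogonal (hq : q ≠ 0) {c : F} {u : F × F × F} (hc : c ≠ 0)
    (horth : beta F q u (0, 0, c) = 0) (hn : ¬ Isotropic F q u) : u.2.1 = 0 ∧ u.1 ≠ 0 := by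
  simp only [beta, zero_pow hq, mul_zero, neg_zero, zero_add, add_zero, mul_eq_zero,
    pow_eq_zero_iff hq, hc, or_false] at horth
  refine ⟨horth, fun hu => hn ?_⟩
  simp [Isotropic, beta, hu, horth, zero_pow hq]

lemma exists_eq_of_ptZero_eq_span {u : F × F × F} (h : ptZero F = Submodule.span F {u}) :
    ∃ c : F, c ≠ 0 ∧ u = (0, 0, c) := by
  obtain ⟨z, rfl⟩ := Submodule.span_singleton_eq_span_singleton.mp h
  exact ⟨z, z.ne_zero, by simp [Units.smul_def]⟩

lemma span_smul_eq_span_smul {s t : F} (hs : s ≠ 0) (ht : t ≠ 0) (v : F × F × F) :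
    Submodule.span F {s • v} = Submodule.span F {t • v} := by
  rw [Submodule.span_singleton_smul_eq hs.isUnit, Submodule.span_singleton_smul_eq ht.isUnit]

lemma eqnLine_congr {A B C A' B' C' : F}
    (h : ∀ v : F × F × F, A * v.1 + B * v.2.1 + C * v.2.2 = 0 ↔
      A' * v.1 + B' * v.2.1 + C' * v.2.2 = 0) :
    eqnLine F q A B C = eqnLine F q A' B' C' := by
  ext P
  exact exists_congr fun v => and_congr_right' <| and_congr_right' <| and_congr_right' (h v)

lemma eqnLine_eq_of_proportional {A B C A' B' C' c d : F} (hc : c ≠ 0) (hd : d ≠ 0)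
    (hA : c * A = d * A') (hB : c * B = d * B') (hC : c * C = d * C') :
    eqnLine F q A B C = eqnLine F q A' B' C' := by
  refine eqnLine_congr fun v => ?_
  have key : c * (A * v.1 + B * v.2.1 + C * v.2.2) = d * (A' * v.1 + B' * v.2.1 + C' * v.2.2) := by
    linear_combination v.1 * hA + v.2.1 * hB + v.2.2 * hC
  rw [← mul_eq_zero_iff_left hc, key, mul_eq_zero_iff_left hd]

/-- The determinant of the columns `v, u, w` is the dot product of `v` with `u × w`. -/
lemma detLine_eq_eqnLine (u w : F × F × F) :
    detLine F q u w = eqnLine F q (u.2.1 * w.2.2 - u.2.2 * w.2.1) (u.2.2 * w.1 - u.1 * w.2.2)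
      (u.1 * w.2.1 - u.2.1 * w.1) := by
  ext P
  refine exists_congr fun v => and_congr_right' <| and_congr_right' <| and_congr_right' ?_
  rw [Matrix.det_fin_three]
  simp only [Matrix.of_apply, Matrix.cons_val', Matrix.cons_val_zero, Matrix.cons_val_one,
    Matrix.cons_val_two, Matrix.empty_val', Matrix.cons_val_fin_one, Matrix.head_cons,
    Matrix.tail_cons, Matrix.head_fin_const]
  constructor <;> intro h <;> linear_combination h

lemma lineN_eq_eqnLine (eta : F) : lineN F q eta = eqnLine F q eta (-1) 0 := by
  ext P
  refine exists_congr fun v => and_congr_right' <| and_congr_right' <| and_congr_right' ?_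
  constructor <;> intro h <;> linear_combination -h

lemma span_mem_eqnLine_iff {A B C : F} {v : F × F × F} (hv : v ≠ 0) (hiso : Isotropic F q v) :
    Submodule.span F {v} ∈ eqnLine F q A B C ↔ A * v.1 + B * v.2.1 + C * v.2.2 = 0 := by
  refine ⟨fun ⟨v', _, _, hspan, hv'⟩ => ?_, fun h => ⟨v, hv, hiso, rfl, h⟩⟩
  obtain ⟨z, rfl⟩ := Submodule.span_singleton_eq_span_singleton.mp hspan
  simp only [Units.smul_def, Prod.smul_fst, Prod.smul_snd, smul_eq_mul] at hv'
  rw [← mul_eq_zero_iff_left z.ne_zero]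
  linear_combination hv'

lemma span_mem_lineN_iff {eta : F} {v : F × F × F} (hv : v ≠ 0) (hiso : Isotropic F q v) :
    Submodule.span F {v} ∈ lineN F q eta ↔ v.2.1 = eta * v.1 := by
  rw [lineN_eq_eqnLine, span_mem_eqnLine_iff hv hiso]
  constructor <;> intro h <;> linear_combination -h

lemma exists_isotropic_of_isUnitalLine_lineN {eta : F} (hl : IsUnitalLine F q (lineN F q eta)) :
    ∃ v : F × F × F, Isotropic F q v ∧ v.1 ≠ 0 ∧ v.2.1 = eta * v.1 := by
  obtain ⟨u, v, hu, hv, hind, hl⟩ := hl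
  have on_line : ∀ x ∈ Submodule.span F ({u, v} : Set (F × F × F)), x ≠ 0 → Isotropic F q x →
      x.2.1 = eta * x.1 := fun x hx hx0 hiso => by
    rw [← span_mem_lineN_iff hx0 hiso, hl]
    exact ⟨⟨x, hx0, hiso, rfl⟩, (Submodule.span_singleton_le_iff_mem _ _).mpr hx⟩
  have hu0 : u ≠ 0 := by simpa using hind.ne_zero 0
  have hv0 : v ≠ 0 := by simpa using hind.ne_zero 1
  have hu2 := on_line u (Submodule.subset_span (by simp)) hu0 hu
  have hv2 := on_line v (Submodule.subset_span (by simp)) hv0 hv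
  by_cases hu1 : u.1 = 0
  · by_cases hv1 : v.1 = 0
    · -- both vectors would be multiples of (0, 0, 1)
      obtain ⟨-, hu3⟩ := LinearIndependent.pair_iff.mp hind v.2.2 (-u.2.2)
        (by ext <;> simp [hu1, hv1, hu2, hv2]; ring)
      exact absurd (Prod.ext hu1 (Prod.ext (by simp [hu2, hu1]) (neg_eq_zero.mp hu3))) hu0
    · exact ⟨v, hv, hv1, hv2⟩
  · exact ⟨u, hu, hu1, hu2⟩

lemma fst_ne_zero_and_snd_eq_of_lineN_eq_detLine {eta c : F} {W : F × F × F} (hq : q ≠ 0)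
    (hl : IsUnitalLine F q (lineN F q eta)) (hc : c ≠ 0)
    (h : lineN F q eta = detLine F q (0, 0, c) W) : W.1 ≠ 0 ∧ W.2.1 = eta * W.1 := by
  simp only [detLine_eq_eqnLine, zero_mul, sub_zero, zero_sub] at h
  have h010 : ((0 : F), (1 : F), (0 : F)) ≠ 0 := by simp
  constructor
  · intro hW
    have hmem : Submodule.span F {((0 : F), (1 : F), (0 : F))} ∈ lineN F q eta := by
      rw [h, span_mem_eqnLine_iff h010 (isotropic_zero_one_zero hq)]
      simp [hW]
    rw [span_mem_lineN_iff h010 (isotropic_zero_one_zero hq)] at hmem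
    simp at hmem
  · obtain ⟨v, hiso, hv1, hv2⟩ := exists_isotropic_of_isUnitalLine_lineN hl
    have hv0 : v ≠ 0 := fun hv => hv1 (by simp [hv])
    have hmem := (span_mem_lineN_iff hv0 hiso).mpr hv2
    rw [h, span_mem_eqnLine_iff hv0 hiso] at hmem
    have : c * v.1 * (W.2.1 - eta * W.1) = 0 := by linear_combination -hmem + c * W.1 * hv2
    exact sub_eq_zero.mp ((mul_eq_zero.mp this).resolve_left (mul_ne_zero hc hv1))

lemma detLine_smul_eq_eqnLine (hq : 0 < q) {eta f g s a D mu h : F} (heta : eta ≠ 0)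
    (hs : s ≠ 0) (ha : a ≠ 0) (hh : h ≠ 0) (hcond : eta ^ q * g + eta * g ^ q = f ^ (q + 1))
    (hD : eta ^ q * h * D = a * (mu * eta ^ q + f ^ q * h)) :
    detLine F q (s • (f, eta, g)) (a, 0, D) =
      eqnLine F q (mu * eta ^ q + f ^ q * h) (-(mu * eta ^ (q - 1) * f + g ^ q * h))
        (-(eta ^ q * h)) := by
  have hE : eta ^ (q - 1) * eta = eta ^ q := by rw [← pow_succ, Nat.sub_add_cancel hq]
  rw [detLine_eq_eqnLine]
  refine eqnLine_eq_of_proportional (mul_ne_zero (pow_ne_zero q heta) hh)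
    (mul_ne_zero (mul_ne_zero hs heta) ha) ?_ ?_ ?_ <;>
    simp only [Prod.smul_fst, Prod.smul_snd, smul_eq_mul]
  · linear_combination s * eta * hD
  · linear_combination (-s * f) * hD + (s * a * h) * hcond + (s * a * mu * f) * hE
  · ring

variable (q) in
def NeighbourOfZeroN (eta mu : F) (P : Submodule F (F × F × F))
    (l : Set (Submodule F (F × F × F))) : Prop :=
  ∃ f g h : F, f ≠ 1 ∧ h ≠ 0 ∧ eta ^ q * g + eta * g ^ q = f ^ (q + 1) ∧
    P = Submodule.span F {(f * h / (1 - f), eta * h / (1 - f), g * h / (1 - f))} ∧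
    l = eqnLine F q (mu * eta ^ q + f ^ q * h) (-(mu * eta ^ (q - 1) * f + g ^ q * h))
      (-(eta ^ q * h))

lemma neighbourPoint_eq_smul (eta f g h : F) :
    ((f * h / (1 - f), eta * h / (1 - f), g * h / (1 - f)) : F × F × F) =
      (h / (1 - f)) • (f, eta, g) := by
  ext <;> simp only [Prod.smul_fst, Prod.smul_snd, smul_eq_mul] <;> ring

lemma NeighbourOfZeroN.rescale {eta mu mu' : F} {P : Submodule F (F × F × F)}
    {l : Set (Submodule F (F × F × F))} (hmu : mu ≠ 0) (hmu' : mu' ≠ 0)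
    (h : NeighbourOfZeroN q eta mu P l) : NeighbourOfZeroN q eta mu' P l := by
  obtain ⟨f, g, h, hf, hh, hcond, rfl, rfl⟩ := h
  have h1f : 1 - f ≠ 0 := sub_ne_zero.mpr hf.symm
  have hh' : mu' / mu * h ≠ 0 := mul_ne_zero (div_ne_zero hmu' hmu) hh
  have hmumu : mu' / mu * mu = mu' := div_mul_cancel₀ _ hmu
  refine ⟨f, g, mu' / mu * h, hf, hh', hcond, ?_, ?_⟩
  · simp only [neighbourPoint_eq_smul]
    exact span_smul_eq_span_smul (div_ne_zero hh h1f) (div_ne_zero hh' h1f) _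
  · refine eqnLine_eq_of_proportional hmu' hmu ?_ ?_ ?_
    · linear_combination (-f ^ q * h) * hmumu
    · linear_combination (g ^ q * h) * hmumu
    · linear_combination (eta ^ q * h) * hmumu

lemma NeighbourOfZeroN.ne_ptZero {eta mu : F} {P : Submodule F (F × F × F)}
    {l : Set (Submodule F (F × F × F))} (heta : eta ≠ 0) (h : NeighbourOfZeroN q eta mu P l) :
    P ≠ ptZero F := by
  obtain ⟨f, g, h, hf, hh, -, rfl, -⟩ := h
  intro hP
  obtain ⟨z, hz⟩ := Submodule.span_singleton_eq_span_singleton.mp hP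
  have := congrArg (fun v => v.2.1) hz
  simp only [Units.smul_def, Prod.smul_snd, Prod.smul_fst, smul_eq_mul] at this
  exact mul_ne_zero z.ne_zero (div_ne_zero (mul_ne_zero heta hh) (sub_ne_zero.mpr hf.symm)) this

lemma neighbourOfZeroN_of_detLine (hq : 0 < q) {eta mu s a c₀ c : F} {u : F × F × F}
    (heta : eta ≠ 0) (hmu : mu ≠ 0) (hs : s ≠ 0) (ha : a ≠ 0) (hc : c ≠ 0)
    (hu : u.2.1 = eta * s) (hus : u.1 ≠ s) (hiso : Isotropic F q u)
    (horth : beta F q (a, 0, c₀) u = 0) :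
    NeighbourOfZeroN q eta mu (Submodule.span F {u}) (detLine F q u (a, 0, c₀ + c)) := by
  set f := u.1 / s
  set g := u.2.2 / s
  have hu_eq : u = s • (f, eta, g) := by
    ext <;> simp only [Prod.smul_fst, Prod.smul_snd, smul_eq_mul, f, g, hu] <;> field_simp
  have hf : f ≠ 1 := fun hf => hus (by rwa [div_eq_one_iff_eq hs] at hf)
  have hh : a * mu / c ≠ 0 := div_ne_zero (mul_ne_zero ha hmu) hc
  rw [hu_eq] at hiso horth ⊢
  have hcond := (isotropic_smul_iff hs).mp hiso
  have hc₀ := (beta_smul_eq_zero_iff hs).mp horth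
  refine ⟨f, g, a * mu / c, hf, hh, hcond, ?_,
    detLine_smul_eq_eqnLine hq heta hs ha hh hcond ?_⟩
  · rw [neighbourPoint_eq_smul]
    exact span_smul_eq_span_smul hs (div_ne_zero hh (sub_ne_zero.mpr hf.symm)) _
  · have hhc : a * mu / c * c = a * mu := div_mul_cancel₀ _ hc
    linear_combination (a * mu / c) * hc₀ + eta ^ q * hhc

lemma neighbourOfZeroN_of_adjCond_left (hq : 0 < q) {p e r : ℕ} {lam eta mu : F}
    {vN w : Flag F q} (heta : eta ≠ 0) (hlam : lam ≠ 0) (hmu : mu ≠ 0)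
    (hl : IsUnitalLine F q (lineN F q eta)) (hvN : vN.1 = (ptZero F, lineN F q eta))
    (h : AdjCond F p q e r lam vN w) : NeighbourOfZeroN q eta mu w.1.1 w.1.2 := by
  obtain ⟨i, -, u₁, u₂, ⟨a₀, b₀, c₀⟩, -, -, h₁, -, hiso₂, h₂, hn₀, horth₁, horth₂, hl₁, hl₂⟩ := h
  rw [hvN] at h₁ hl₁
  obtain ⟨c, hc, rfl⟩ := exists_eq_of_ptZero_eq_span h₁
  obtain ⟨rfl, ha₀⟩ := snd_eq_zero_and_fst_ne_zero_of_orthogonal hq.ne' hc horth₁ hn₀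
  obtain ⟨hs, hu₂⟩ := fst_ne_zero_and_snd_eq_of_lineN_eq_detLine hq.ne' hl hc hl₁
  have hW : ((a₀, 0, c₀) : F × F × F) + lam ^ (q * p ^ (i * r)) • (0, 0, c) =
      (a₀, 0, c₀ + lam ^ (q * p ^ (i * r)) * c) := by simp
  rw [h₂, hl₂, hW]
  exact neighbourOfZeroN_of_detLine hq heta hmu hs ha₀ (mul_ne_zero (pow_ne_zero _ hlam) hc)
    (by simpa using hu₂) (by simpa using ha₀) hiso₂ horth₂

lemma neighbourOfZeroN_of_adjCond_right (hq : 0 < q) {p e r : ℕ} {lam eta mu : F}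
    {vN w : Flag F q} (heta : eta ≠ 0) (hmu : mu ≠ 0)
    (hl : IsUnitalLine F q (lineN F q eta)) (hvN : vN.1 = (ptZero F, lineN F q eta))
    (h : AdjCond F p q e r lam w vN) : NeighbourOfZeroN q eta mu w.1.1 w.1.2 := by
  obtain ⟨i, -, u₁, u₂, ⟨a₀, b₀, c₀⟩, -, hiso₁, h₁, -, -, h₂, hn₀, horth₁, horth₂, hl₁, hl₂⟩ := h
  rw [hvN] at h₂ hl₂
  obtain ⟨c, hc, rfl⟩ := exists_eq_of_ptZero_eq_span h₂
  obtain ⟨rfl, ha₀⟩ := snd_eq_zero_and_fst_ne_zero_of_orthogonal hq.ne' hc horth₂ hn₀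
  obtain ⟨hW₁, hW₂⟩ := fst_ne_zero_and_snd_eq_of_lineN_eq_detLine hq.ne' hl hc hl₂
  simp only [Prod.fst_add, Prod.snd_add, Prod.smul_fst, Prod.smul_snd, smul_eq_mul,
    zero_add] at hW₁ hW₂
  set mu' := lam ^ (q * p ^ (i * r))
  have hb₁ : u₁.2.1 ≠ 0 := fun hb => hW₁ <| by
    simpa [hb, heta] using hW₂.symm
  have hus : u₁.1 ≠ u₁.2.1 / eta := fun hus => ha₀ <| by
    rw [eq_div_iff heta] at hus
    have : eta * a₀ = 0 := by linear_combination -hW₂ - mu' * hus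
    exact (mul_eq_zero.mp this).resolve_left heta
  have hW : ((a₀, 0, c₀) : F × F × F) + (0, 0, c) = (a₀, 0, c₀ + c) := by simp
  rw [hl₁, hW, h₁]
  exact neighbourOfZeroN_of_detLine hq heta hmu (div_ne_zero hb₁ heta) ha₀ hc
    (mul_div_cancel₀ _ heta).symm hus hiso₁ horth₁

lemma adjCond_of_neighbourOfZeroN (hq : 0 < q) {p e r i : ℕ} {lam eta : F} {vN w : Flag F q}
    (hi : i < 2 * e / r) (heta : eta ≠ 0) (hvN : vN.1 = (ptZero F, lineN F q eta))
    (h : NeighbourOfZeroN q eta (lam ^ (q * p ^ (i * r))) w.1.1 w.1.2) :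
    AdjCond F p q e r lam vN w := by
  obtain ⟨f, g, h, hf, hh, hcond, hP, hl⟩ := h
  have h1f : 1 - f ≠ 0 := sub_ne_zero.mpr hf.symm
  set s := h / (1 - f)
  have hs : s ≠ 0 := div_ne_zero hh h1f
  have hsf : h + s * f = s := by simp only [s]; field_simp; ring
  set c₀ := h * f ^ q / eta ^ q
  have hc₀ : c₀ * eta ^ q = h * f ^ q := div_mul_cancel₀ _ (pow_ne_zero q heta)
  rw [neighbourPoint_eq_smul] at hP
  refine ⟨i, hi, (0, 0, 1), s • (f, eta, g), (h, 0, c₀), by simp, isotropic_zero_zero_one hq.ne',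
    by rw [hvN]; rfl, smul_ne_zero hs (by simp [heta]), (isotropic_smul_iff hs).mpr hcond, hP,
    ?_, by simp [beta, zero_pow hq.ne'], (beta_smul_eq_zero_iff hs).mpr hc₀, ?_, ?_⟩
  · simp [Isotropic, beta, zero_pow hq.ne', hh, ← pow_succ']
  · rw [hvN, lineN_eq_eqnLine, detLine_eq_eqnLine]
    refine eqnLine_eq_of_proportional (neg_ne_zero.mpr hs) one_ne_zero ?_ ?_ ?_ <;>
      simp only [Prod.fst_add, Prod.snd_add, Prod.smul_fst, Prod.smul_snd, smul_eq_mul]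
    · ring
    · linear_combination -hsf
    · ring
  · have hW : ((h, 0, c₀) : F × F × F) + lam ^ (q * p ^ (i * r)) • (0, 0, 1) =
        (h, 0, c₀ + lam ^ (q * p ^ (i * r))) := by simp
    rw [hl, hW]
    refine (detLine_smul_eq_eqnLine hq heta hs hh hh hcond ?_).symm
    linear_combination h * hc₀

theorem stmt9_general (F : Type) [Field F] (p q e r : ℕ)
    (he : 0 < e) (hq2 : 2 < q)
    (hr : 0 < r) (hre : r ∣ 2 * e)
    (lam : F) (hlam : lam ≠ 0)
    (k : ℕ) (hk : 0 < k)
    (eta : F) (heta : eta ≠ 0)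
    (vN w : Flag F q) (hvN : vN.1 = (ptZero F, lineN F q eta)) :
    (unitaryGraph F p q e r lam).Adj vN w ↔
      ∃ i < k, ∃ f g h : F, f ≠ 1 ∧ h ≠ 0 ∧ eta ^ q * g + eta * g ^ q = f ^ (q + 1) ∧
        w.1.1 = Submodule.span F {(f * h / (1 - f), eta * h / (1 - f), g * h / (1 - f))} ∧
        w.1.2 = eqnLine F q (lam ^ (q * p ^ (i * r)) * eta ^ q + f ^ q * h)
          (-(lam ^ (q * p ^ (i * r)) * eta ^ (q - 1) * f + g ^ q * h)) (-(eta ^ q * h)) := by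
  have hq : 0 < q := by omega
  have hmu : ∀ i, lam ^ (q * p ^ (i * r)) ≠ 0 := fun i => pow_ne_zero _ hlam
  have hl : IsUnitalLine F q (lineN F q eta) := by
    simpa [hvN] using vN.2.2.1
  rw [unitaryGraph, SimpleGraph.fromRel_adj]
  constructor
  · rintro ⟨-, hadj | hadj⟩
    · exact ⟨0, hk, neighbourOfZeroN_of_adjCond_left hq heta hlam (hmu 0) hl hvN hadj⟩
    · exact ⟨0, hk, neighbourOfZeroN_of_adjCond_right hq heta (hmu 0) hl hvN hadj⟩
  · rintro ⟨i, -, hw⟩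
    have hw₀ : NeighbourOfZeroN q eta (lam ^ (q * p ^ (0 * r))) w.1.1 w.1.2 :=
      NeighbourOfZeroN.rescale (hmu i) (hmu 0) hw
    have hi : 0 < 2 * e / r := Nat.div_pos (Nat.le_of_dvd (by omega) hre) hr
    refine ⟨fun hvw => hw₀.ne_ptZero heta ?_,
      Or.inl (adjCond_of_neighbourOfZeroN hq hi heta hvN hw₀)⟩
    rw [← hvw, hvN]

theorem stmt9 (F : Type) [Field F] [Fintype F] (p q e r : ℕ)
    (hp : p.Prime) (he : 0 < e) (hq : q = p ^ e) (hq2 : 2 < q)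
    (hr : 0 < r) (hre : r ∣ 2 * e) (hF : Fintype.card F = q ^ 2)
    (lam : F) (hlam : lam ≠ 0)
    (hlamq : ∃ t : ℕ, t < 2 * e / r ∧ lam ^ p ^ (t * r) = lam ^ q)
    (k : ℕ) (hk : 0 < k) (hkfix : lam ^ p ^ (k * r) = lam)
    (hkmin : ∀ j : ℕ, 0 < j → lam ^ p ^ (j * r) = lam → k ≤ j)
    (eta : F) (heta : eta ≠ 0)
    (vN w : Flag F q) (hvN : vN.1 = (ptZero F, lineN F q eta)) :
    (unitaryGraph F p q e r lam).Adj vN w ↔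
      ∃ i < k, ∃ f g h : F, f ≠ 1 ∧ h ≠ 0 ∧ eta ^ q * g + eta * g ^ q = f ^ (q + 1) ∧
        w.1.1 = Submodule.span F {(f * h / (1 - f), eta * h / (1 - f), g * h / (1 - f))} ∧
        w.1.2 = eqnLine F q (lam ^ (q * p ^ (i * r)) * eta ^ q + f ^ q * h)
          (-(lam ^ (q * p ^ (i * r)) * eta ^ (q - 1) * f + g ^ q * h)) (-(eta ^ q * h)) :=
  stmt9_general F p q e r he hq2 hr hre lam hlam k hk eta heta vN w hvN

end UnitaryGraphPaper
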